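/- arXiv:1201.3507 — 4 statements merged into one kernel-verified Lean document; each statement's English description precedes it below -/
import Mathlib

section
/- Let p be a prime, n ≥ 2, m ≥ 1 an integer and 1 ≤ i ≤ n-1. Let g ∈ K_m have block form g = [[a,b],[c,d]] with a ∈ M_{n-1}(ℤ_p), b ∈ ℤ_p^{n-1} a column vector, c a row vector and d ∈ ℤ_p. Then g ∈ K_m ∩ ϖ^{f^i} K_m ϖ^{-f^i} if and only if a ∈ H ∩ 𝜛_i H 𝜛_i^{-1} and b ∈ L_i. -/
/-!
Conventions: throughout, the paper's dimension `n ≥ 2` is represented as `n + 1`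
where `n : ℕ` satisfies `n ≥ 1`; so matrices in the paper's `GL_n(ℚ_p)` are
`(n+1) × (n+1)` matrices here, and tuples in the paper's `ℤ^{n-1}` are `f : Fin n → ℤ`.
Elements of `GL(ℚ_p)` are represented as square matrices `g` with `IsUnit g`.
-/

/-- `ψ : ℚ_p → ℂ` is an additive character with conductor `ℤ_p`: a continuous
homomorphism from `(ℚ_p, +)` to the unit circle in `ℂ`, trivial on `ℤ_p`
(the elements of norm at most `1`) but nontrivial on `p⁻¹ℤ_p`
(the elements of norm at most `p`). -/
structure IsAddCharCondZp (p : ℕ) [Fact p.Prime] (ψ : ℚ_[p] → ℂ) : Prop where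
  map_add : ∀ x y, ψ (x + y) = ψ x * ψ y
  continuous : Continuous ψ
  abs_eq_one : ∀ x, ‖ψ x‖ = 1
  trivial_on_int : ∀ x : ℚ_[p], ‖x‖ ≤ 1 → ψ x = 1
  nontrivial_on : ∃ x : ℚ_[p], ‖x‖ ≤ (p : ℝ) ∧ ψ x ≠ 1

variable (p : ℕ) [Fact p.Prime]

/-- `ϖ^f = diag(p^{f 0}, …, p^{f (n-1)}, 1)`. -/
noncomputable def varpi (n : ℕ) (f : Fin n → ℤ) : Matrix (Fin (n + 1)) (Fin (n + 1)) ℚ_[p] :=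
  Matrix.diagonal (Fin.snoc (fun j => (p : ℚ_[p]) ^ f j) 1)

/-- `f` is dominant: `f 0 ≥ f 1 ≥ … ≥ f (n-1) ≥ 0`. -/
def Dominant (n : ℕ) (f : Fin n → ℤ) : Prop :=
  Antitone f ∧ ∀ j, 0 ≤ f j

/-- membership in `U`, the group of upper triangular unipotent matrices. -/
def IsUnipUpper (n : ℕ) (u : Matrix (Fin (n + 1)) (Fin (n + 1)) ℚ_[p]) : Prop :=
  (∀ i j, j < i → u i j = 0) ∧ ∀ i, u i i = 1

/-- the extension of `ψ` to `U`: `ψ(u) = ψ(u_{1,2} + u_{2,3} + … + u_{n-1,n})`. -/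
noncomputable def psiU (n : ℕ) (ψ : ℚ_[p] → ℂ)
    (u : Matrix (Fin (n + 1)) (Fin (n + 1)) ℚ_[p]) : ℂ :=
  ψ (∑ i : Fin n, u i.castSucc i.succ)

/-- the block matrix `[[a, b], [c, d]]` with top-left `n × n` block `a`,
top-right column `b`, bottom row `c` and bottom-right scalar `d`. -/
def blk (n : ℕ) (a : Matrix (Fin n) (Fin n) ℚ_[p]) (b c : Fin n → ℚ_[p]) (d : ℚ_[p]) :
    Matrix (Fin (n + 1)) (Fin (n + 1)) ℚ_[p] :=
  Matrix.of (Fin.snoc (fun i => Fin.snoc (a i) (b i)) (Fin.snoc c d))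

/-- membership in `K_m ⊆ GL_{n+1}(ℤ_p)`: integral entries, determinant a unit of `ℤ_p`,
and last row congruent to `(0, …, 0, 1)` modulo `p^m`. -/
def InK (n m : ℕ) (g : Matrix (Fin (n + 1)) (Fin (n + 1)) ℚ_[p]) : Prop :=
  (∀ i j, ‖g i j‖ ≤ 1) ∧ ‖g.det‖ = 1 ∧
    (∀ j : Fin n, ‖g (Fin.last n) j.castSucc‖ ≤ (p : ℝ) ^ (-(m : ℤ))) ∧
    ‖g (Fin.last n) (Fin.last n) - 1‖ ≤ (p : ℝ) ^ (-(m : ℤ))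

/-- `f^i = (1, …, 1, 0, …, 0)` with `i` ones. -/
def fvec (n i : ℕ) : Fin n → ℤ := fun j => if (j : ℕ) < i then 1 else 0

/-- membership in `K_m ∩ ϖ^{f^i} K_m ϖ^{-f^i}`
(`g ∈ ϖ^{f^i} K_m ϖ^{-f^i}` iff `ϖ^{-f^i} g ϖ^{f^i} ∈ K_m`). -/
def InKcap (n m i : ℕ) (g : Matrix (Fin (n + 1)) (Fin (n + 1)) ℚ_[p]) : Prop :=
  InK p n m g ∧ InK p n m (varpi p n (-(fvec n i)) * g * varpi p n (fvec n i))

/-- membership in `H = GL_n(ℤ_p)`. -/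
def InH (n : ℕ) (h : Matrix (Fin n) (Fin n) ℚ_[p]) : Prop :=
  (∀ i j, ‖h i j‖ ≤ 1) ∧ ‖h.det‖ = 1

/-- `𝜛_i = diag(p, …, p, 1, …, 1)` with `i` entries equal to `p`. -/
noncomputable def wSm (n i : ℕ) : Matrix (Fin n) (Fin n) ℚ_[p] :=
  Matrix.diagonal (fun j => if (j : ℕ) < i then (p : ℚ_[p]) else 1)

/-- `𝜛_i⁻¹ = diag(p⁻¹, …, p⁻¹, 1, …, 1)` with `i` entries equal to `p⁻¹`. -/
noncomputable def wSmInv (n i : ℕ) : Matrix (Fin n) (Fin n) ℚ_[p] :=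
  Matrix.diagonal (fun j => if (j : ℕ) < i then (p : ℚ_[p])⁻¹ else 1)

/-- membership in `H ∩ 𝜛_i H 𝜛_i⁻¹` (`a ∈ 𝜛_i H 𝜛_i⁻¹` iff `𝜛_i⁻¹ a 𝜛_i ∈ H`). -/
def InHcap (n i : ℕ) (a : Matrix (Fin n) (Fin n) ℚ_[p]) : Prop :=
  InH p n a ∧ InH p n (wSmInv p n i * a * wSm p n i)

/-- membership in `L_i = (pℤ_p)^i × ℤ_p^{n-i} ⊆ ℤ_p^n`. -/
def InL (n i : ℕ) (v : Fin n → ℚ_[p]) : Prop :=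
  ∀ j : Fin n, if (j : ℕ) < i then ‖v j‖ ≤ (p : ℝ)⁻¹ else ‖v j‖ ≤ 1

/-- `R` is a complete set of representatives for the left cosets
`H/(H ∩ 𝜛_i H 𝜛_i⁻¹)`: `R ⊆ H` and every `h ∈ H` lies in the coset of
exactly one element of `R`. -/
def IsRepsH (n i : ℕ) (R : Set (Matrix (Fin n) (Fin n) ℚ_[p])) : Prop :=
  (∀ r ∈ R, InH p n r) ∧ ∀ h, InH p n h → ∃! r, r ∈ R ∧ InHcap p n i (r⁻¹ * h)

/-- `S` is a complete set of representatives for `ℤ_p^n/(a·L_i)`: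
`S ⊆ ℤ_p^n` and every `v ∈ ℤ_p^n` is congruent modulo `a·L_i` to
exactly one element of `S`. -/
def IsRepsL (n i : ℕ) (a : Matrix (Fin n) (Fin n) ℚ_[p]) (S : Set (Fin n → ℚ_[p])) : Prop :=
  (∀ x ∈ S, ∀ j, ‖x j‖ ≤ 1) ∧
    ∀ v : Fin n → ℚ_[p], (∀ j, ‖v j‖ ≤ 1) →
      ∃! x, x ∈ S ∧ ∃ w, InL p n i w ∧ v - x = a.mulVec w

/-- `I_i`: the set of `ε ∈ {0,1}^n ⊆ ℤ^n` with `Σ_j ε_j = i`. -/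
def ISet (n i : ℕ) : Set (Fin n → ℤ) :=
  {ε | (∀ j, ε j = 0 ∨ ε j = 1) ∧ ∑ j, ε j = (i : ℤ)}

/-!
Conjugation by `ϖ^{f^i} = diag(𝜛_i, 1)` acts blockwise: it sends `[[a, b], [c, d]]` to
`[[𝜛_i⁻¹ a 𝜛_i, 𝜛_i⁻¹ b], [c 𝜛_i, d]]` and preserves the determinant. Hence the conjugate of
`g ∈ K_m` is again in `K_m` exactly when `𝜛_i⁻¹ a 𝜛_i` is integral and `b ∈ L_i`; the
condition on its last row is inherited from `g` because `𝜛_i` is integral. It remains to see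
that `a ∈ H`: expanding `det g` along the last row, every term except `d · det a` lies in
`p^m ℤ_p`, so `m ≥ 1` and `|det g| = 1` force `|det a| = 1`.
-/

open Matrix

theorem Matrix.norm_det_le_one_of_forall_norm_le_one {K ι : Type*} [NormedField K]
    [IsUltrametricDist K] [Fintype ι] [DecidableEq ι] {A : Matrix ι ι K}
    (h : ∀ i j, ‖A i j‖ ≤ 1) : ‖A.det‖ ≤ 1 := by
  rw [det_apply]
  refine IsUltrametricDist.norm_sum_le_of_forall_le_of_nonneg zero_le_one fun σ _ => ?_
  rw [norm_units_zsmul, norm_prod]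
  exact Finset.prod_le_one (fun _ _ => norm_nonneg _) fun _ _ => h _ _

theorem Matrix.det_diagonal_inv_mul_mul_diagonal {K ι : Type*} [Field K] [Fintype ι]
    [DecidableEq ι] {w : ι → K} (hw : ∀ j, w j ≠ 0) (A : Matrix ι ι K) :
    (diagonal w⁻¹ * A * diagonal w).det = A.det := by
  rw [det_mul, det_mul, mul_right_comm, ← det_mul, diagonal_mul_diagonal]
  simp [hw]

section Blocks

variable {n : ℕ} {a : Matrix (Fin n) (Fin n) ℚ_[p]} {b c : Fin n → ℚ_[p]} {d : ℚ_[p]}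

@[simp]
theorem blk_castSucc_castSucc (j k : Fin n) : blk p n a b c d j.castSucc k.castSucc = a j k := by
  simp [blk]

@[simp]
theorem blk_castSucc_last (j : Fin n) : blk p n a b c d j.castSucc (Fin.last n) = b j := by
  simp [blk]

@[simp]
theorem blk_last_castSucc (k : Fin n) : blk p n a b c d (Fin.last n) k.castSucc = c k := by
  simp [blk]

@[simp]
theorem blk_last_last : blk p n a b c d (Fin.last n) (Fin.last n) = d := by
  simp [blk]

@[simp]
theorem blk_submatrix_castSucc :
    (blk p n a b c d).submatrix Fin.castSucc Fin.castSucc = a := by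
  ext j k
  simp

theorem diagonal_snoc_mul_blk_mul_diagonal_snoc (u v : Fin n → ℚ_[p]) :
    diagonal (Fin.snoc u 1) * blk p n a b c d * diagonal (Fin.snoc v 1)
      = blk p n (diagonal u * a * diagonal v) (u * b) (c * v) d := by
  ext x y
  rw [mul_diagonal, diagonal_mul]
  induction x using Fin.lastCases <;> induction y using Fin.lastCases <;>
    simp [mul_diagonal, diagonal_mul]

theorem inK_blk_iff {m : ℕ} :
    InK p n m (blk p n a b c d) ↔
      (∀ j k, ‖a j k‖ ≤ 1) ∧ (∀ j, ‖b j‖ ≤ 1) ∧ (∀ k, ‖c k‖ ≤ (p : ℝ) ^ (-(m : ℤ))) ∧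
        ‖d - 1‖ ≤ (p : ℝ) ^ (-(m : ℤ)) ∧ ‖(blk p n a b c d).det‖ = 1 := by
  have hpm : (p : ℝ) ^ (-(m : ℤ)) ≤ 1 :=
    zpow_le_one_of_nonpos₀ (by exact_mod_cast (Fact.out : p.Prime).one_le) (by omega)
  have hint : (∀ x y, ‖blk p n a b c d x y‖ ≤ 1) ↔
      (∀ j k, ‖a j k‖ ≤ 1) ∧ (∀ j, ‖b j‖ ≤ 1) ∧ (∀ k, ‖c k‖ ≤ 1) ∧ ‖d‖ ≤ 1 := by
    simp only [Fin.forall_fin_succ', blk_castSucc_castSucc, blk_castSucc_last,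
      blk_last_castSucc, blk_last_last, forall_and]
    tauto
  have hd : ‖d - 1‖ ≤ (p : ℝ) ^ (-(m : ℤ)) → ‖d‖ ≤ 1 := fun h => by
    simpa using (IsUltrametricDist.norm_add_le_max (d - 1) 1).trans
      (max_le (h.trans hpm) norm_one.le)
  rw [InK, hint]
  simp only [blk_last_castSucc, blk_last_last]
  constructor
  · rintro ⟨⟨ha, hb, -, -⟩, hdet, hc, hd1⟩
    exact ⟨ha, hb, hc, hd1, hdet⟩
  · rintro ⟨ha, hb, hc, hd1, hdet⟩
    exact ⟨⟨ha, hb, fun k => (hc k).trans hpm, hd hd1⟩, hdet, hc, hd1⟩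

theorem norm_det_eq_one_of_inK_blk {m : ℕ} (hm : 1 ≤ m) (hg : InK p n m (blk p n a b c d)) :
    ‖a.det‖ = 1 := by
  obtain ⟨ha, -, hc, -, hdet⟩ := (inK_blk_iff p).1 hg
  set g := blk p n a b c d
  have hpm : (p : ℝ) ^ (-(m : ℤ)) < 1 :=
    zpow_lt_one_of_neg₀ (by exact_mod_cast (Fact.out : p.Prime).one_lt) (by omega)
  have hexp : g.det = (∑ j : Fin n, (-1) ^ (n + j : ℕ) * c j *
      (g.submatrix (Fin.last n).succAbove j.castSucc.succAbove).det) + d * a.det := by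
    rw [det_succ_row g (Fin.last n), Fin.sum_univ_castSucc]
    simp [g]
  have hminor : ‖∑ j : Fin n, (-1) ^ (n + j : ℕ) * c j *
      (g.submatrix (Fin.last n).succAbove j.castSucc.succAbove).det‖ < 1 := by
    refine lt_of_le_of_lt (IsUltrametricDist.norm_sum_le_of_forall_le_of_nonneg
      (by positivity) fun j _ => ?_) hpm
    rw [norm_mul, norm_mul, norm_pow, norm_neg, norm_one, one_pow, one_mul]
    exact mul_le_of_le_one_right (norm_nonneg _)
      (norm_det_le_one_of_forall_norm_le_one fun _ _ => hg.1 _ _) |>.trans (hc j)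
  have hcorner : 1 ≤ ‖d * a.det‖ := by
    rw [hexp] at hdet
    exact (le_max_iff.1 (hdet.ge.trans (IsUltrametricDist.norm_add_le_max _ _))).resolve_left
      hminor.not_ge
  have hd1 : ‖d‖ ≤ 1 := by simpa [g] using hg.1 (Fin.last n) (Fin.last n)
  rw [norm_mul] at hcorner
  exact le_antisymm (norm_det_le_one_of_forall_norm_le_one ha)
    (hcorner.trans (mul_le_of_le_one_left (norm_nonneg _) hd1))

end Blocks

section Scaling

variable {n : ℕ} (i : ℕ)

noncomputable def wSmEntry (j : Fin n) : ℚ_[p] := if (j : ℕ) < i then p else 1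

theorem wSm_eq_diagonal : wSm p n i = diagonal (wSmEntry p i) := rfl

theorem wSmInv_eq_diagonal : wSmInv p n i = diagonal (wSmEntry p i)⁻¹ := by
  rw [wSmInv]
  congr 1
  ext j
  simp only [wSmEntry, Pi.inv_apply]
  split_ifs <;> simp

theorem varpi_fvec : varpi p n (fvec n i) = diagonal (Fin.snoc (wSmEntry p i) 1) := by
  rw [varpi]
  congr 2
  ext j
  simp only [fvec, wSmEntry]
  split_ifs <;> simp

theorem varpi_neg_fvec : varpi p n (-fvec n i) = diagonal (Fin.snoc (wSmEntry p i)⁻¹ 1) := by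
  rw [varpi]
  congr 2
  ext j
  simp only [fvec, wSmEntry, Pi.neg_apply, Pi.inv_apply]
  split_ifs <;> simp

theorem wSmEntry_ne_zero (j : Fin n) : wSmEntry p i j ≠ 0 := by
  unfold wSmEntry
  split_ifs
  · exact_mod_cast (Fact.out : p.Prime).ne_zero
  · exact one_ne_zero

theorem norm_wSmEntry_le_one (j : Fin n) : ‖wSmEntry p i j‖ ≤ 1 := by
  unfold wSmEntry
  split_ifs
  · exact (Padic.norm_p_lt_one).le
  · simp

theorem norm_inv_wSmEntry_mul_le_one_iff (j : Fin n) (x : ℚ_[p]) :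
    ‖(wSmEntry p i j)⁻¹ * x‖ ≤ 1 ↔ if (j : ℕ) < i then ‖x‖ ≤ (p : ℝ)⁻¹ else ‖x‖ ≤ 1 := by
  unfold wSmEntry
  split_ifs
  · rw [norm_mul, norm_inv, Padic.norm_p, inv_inv,
      ← le_div_iff₀' (Nat.cast_pos.2 (Fact.out : p.Prime).pos), one_div]
  · simp

theorem varpi_conj_blk (a : Matrix (Fin n) (Fin n) ℚ_[p]) (b c : Fin n → ℚ_[p]) (d : ℚ_[p]) :
    varpi p n (-fvec n i) * blk p n a b c d * varpi p n (fvec n i)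
      = blk p n (wSmInv p n i * a * wSm p n i) ((wSmEntry p i)⁻¹ * b) (c * wSmEntry p i) d := by
  rw [varpi_neg_fvec, varpi_fvec, diagonal_snoc_mul_blk_mul_diagonal_snoc, wSmInv_eq_diagonal,
    wSm_eq_diagonal]

theorem det_varpi_conj (g : Matrix (Fin (n + 1)) (Fin (n + 1)) ℚ_[p]) :
    (varpi p n (-fvec n i) * g * varpi p n (fvec n i)).det = g.det := by
  have hinv : Fin.snoc (wSmEntry p i)⁻¹ 1 =
      (Fin.snoc (wSmEntry p i) 1 : Fin (n + 1) → ℚ_[p])⁻¹ := by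
    ext j
    induction j using Fin.lastCases <;> simp
  rw [varpi_neg_fvec, varpi_fvec, hinv]
  refine det_diagonal_inv_mul_mul_diagonal (fun j => ?_) g
  induction j using Fin.lastCases <;> simp [wSmEntry_ne_zero]

end Scaling

theorem mem_K_inter_conj_iff_general
    (p : ℕ) [Fact p.Prime] (n : ℕ) (m : ℕ) (hm : 1 ≤ m)
    (i : ℕ)
    (a : Matrix (Fin n) (Fin n) ℚ_[p]) (b c : Fin n → ℚ_[p]) (d : ℚ_[p])
    (hg : InK p n m (blk p n a b c d)) :
    InKcap p n m i (blk p n a b c d) ↔ InHcap p n i a ∧ InL p n i b := by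
  have hdet_a := norm_det_eq_one_of_inK_blk p hm hg
  obtain ⟨ha, -, hc, hd, hdet⟩ := (inK_blk_iff p).1 hg
  have hcw (k : Fin n) : ‖c k * wSmEntry p i k‖ ≤ (p : ℝ) ^ (-(m : ℤ)) := by
    rw [norm_mul]
    exact (mul_le_of_le_one_right (norm_nonneg _) (norm_wSmEntry_le_one p i k)).trans (hc k)
  rw [InKcap, and_iff_right hg, varpi_conj_blk, inK_blk_iff, ← varpi_conj_blk, det_varpi_conj,
    InHcap, InH, InH, wSmInv_eq_diagonal, wSm_eq_diagonal,
    det_diagonal_inv_mul_mul_diagonal (wSmEntry_ne_zero p i)]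
  simp only [InL, ← norm_inv_wSmEntry_mul_le_one_iff, Pi.mul_apply]
  tauto

/-- for `g = [[a,b],[c,d]] ∈ K_m`, one has
`g ∈ K_m ∩ ϖ^{f^i} K_m ϖ^{-f^i}` iff `a ∈ H ∩ 𝜛_i H 𝜛_i⁻¹` and `b ∈ L_i`. -/
theorem mem_K_inter_conj_iff
    (p : ℕ) [Fact p.Prime] (n : ℕ) (hn : 1 ≤ n) (m : ℕ) (hm : 1 ≤ m)
    (i : ℕ) (hi1 : 1 ≤ i) (hi2 : i ≤ n)
    (a : Matrix (Fin n) (Fin n) ℚ_[p]) (b c : Fin n → ℚ_[p]) (d : ℚ_[p])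
    (hg : InK p n m (blk p n a b c d)) :
    InKcap p n m i (blk p n a b c d) ↔ InHcap p n i a ∧ InL p n i b :=
  mem_K_inter_conj_iff_general p n m hm i a b c d hg
end

section
/- Let A be a commutative ring, m ≥ 1, x_1,…,x_m ∈ A, and λ ∈ ℕ^m with λ_1 ≥ λ_2 ≥ … ≥ λ_m. For every 1 ≤ r ≤ m: e_r(x_1,…,x_m) · det((x_j^{λ_i+m-i})_{1≤i,j≤m}) = Σ_{ε ∈ {0,1}^m, Σ_j ε_j = r} det((x_j^{λ_i+ε_i+m-i})_{1≤i,j≤m}), where e_r denotes the r-th elementary symmetric polynomial e_r(x) = Σ_{1≤j_1<…<j_r≤m} x_{j_1}···x_{j_r}. -/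
/-- dual Pieri rule for Schur polynomials in bialternant form, over an
arbitrary commutative ring: for `λ_1 ≥ … ≥ λ_m ≥ 0` and `1 ≤ r ≤ m`,
`e_r(x) · det((x_j^{λ_i+m-i})) = Σ_{ε ∈ {0,1}^m, Σε = r} det((x_j^{λ_i+ε_i+m-i}))`
(indices are `0`-based here: the paper's `i` is `i + 1`, so the exponent `λ_i + m - i`
reads `λ i + (m - 1 - i)`). -/
theorem dual_pieri_bialternant
    {A : Type*} [CommRing A] (m : ℕ) (hm : 1 ≤ m) (x : Fin m → A)
    (lam : Fin m → ℕ) (hlam : Antitone lam)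
    (r : ℕ) (hr1 : 1 ≤ r) (hr2 : r ≤ m) :
    (∑ t ∈ Finset.univ.powersetCard r, ∏ j ∈ t, x j) *
        (Matrix.of fun i j : Fin m => x j ^ (lam i + (m - 1 - (i : ℕ)))).det =
      ∑ ε ∈ Finset.univ.filter
          (fun ε : Fin m → Bool => (Finset.univ.filter fun j => ε j = true).card = r),
        (Matrix.of fun i j : Fin m =>
          x j ^ (lam i + (if ε i then 1 else 0) + (m - 1 - (i : ℕ)))).det := by
  classical
  simp only [Matrix.det_apply', Matrix.of_apply]
  rw [Finset.sum_mul]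
  simp only [Finset.mul_sum]
  rw [Finset.sum_comm]
  conv_rhs => rw [Finset.sum_comm]
  refine Finset.sum_congr rfl fun σ _ => ?_
  refine Finset.sum_nbij' (fun t j => decide (σ.symm j ∈ t))
    (fun ε => Finset.univ.filter fun i => ε (σ i) = true) ?_ ?_ ?_ ?_ ?_
  · intro t ht
    rw [Finset.mem_powersetCard_univ] at ht
    simp only [Finset.mem_filter, Finset.mem_univ, true_and, decide_eq_true_eq]
    rw [← ht]
    apply Finset.card_bij' (fun j _ => σ.symm j) (fun i _ => σ i) <;>
      simp (config := {contextual := true}) [Finset.mem_filter]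
  · intro ε hε
    simp only [Finset.mem_filter, Finset.mem_univ, true_and] at hε
    rw [Finset.mem_powersetCard_univ, ← hε]
    apply Finset.card_bij' (fun i _ => σ i) (fun j _ => σ.symm j) <;>
      simp (config := {contextual := true}) [Finset.mem_filter]
  · intro t ht
    ext i
    simp [Finset.mem_filter]
  · intro ε hε
    funext j
    simp [Finset.mem_filter]
  · intro t ht
    rw [mul_left_comm]
    congr 1
    have : (∏ j ∈ t, x j) = ∏ i : Fin m, x i ^ (if i ∈ t then 1 else 0) := by
      simp [pow_ite]
    rw [this, ← Finset.prod_mul_distrib]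
    refine Finset.prod_congr rfl fun i _ => ?_
    rw [← pow_add]
    congr 1
    simp only [Equiv.symm_apply_apply, decide_eq_true_eq]
    by_cases h : i ∈ t <;> simp [h] <;> omega
end

section
/- Let A be a commutative ring, N ≥ 1, x_1,…,x_N ∈ A and k ∈ ℕ. Let M be the N×N matrix with entries M_{1j} = x_j^{k+N-1} for the first row and M_{ij} = x_j^{N-i} for 2 ≤ i ≤ N, and let V be the N×N matrix with entries V_{ij} = x_j^{N-i}. Then det M = h_k(x)·det V, where h_k(x) = Σ_{(k_1,…,k_N) ∈ ℕ^N, k_1+…+k_N = k} x_1^{k_1}···x_N^{k_N}. -/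
/-!
Let `H(t) = ∏ₗ (1 - xₗ t)⁻¹ = ∑_d h_d(x) t^d` and `H_k(t) = ∑_d h_{k+d}(x) t^d`. Dividing
`Q(t) = ∏ₗ (1 - xₗ t)` by `1 - xⱼ t` leaves a polynomial `E` of degree `N - 1` with
`E · H = (1 - xⱼ t)⁻¹ = ∑_d xⱼ^d t^d`. As `deg E < N`, the coefficient of `t^(k+N-1)` in `E · H`
is that of `t^(N-1)` in `E · H_k = (Q · H_k) · (1 - xⱼ t)⁻¹`, so `xⱼ^(k+N-1) = ∑ᵢ cᵢ xⱼ^(N-1-i)`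
with `cᵢ` the coefficients of `Q · H_k`. They do not depend on `j`, and `c₀ = h_k`: the first row
of `M` is `h_k` times the first row of `V` plus a combination of the other rows of `V`.
-/

open Finset PowerSeries

namespace PowerSeries

theorem one_sub_C_mul_X_mul_mk_pow {R : Type*} [CommRing R] (a : R) :
    (1 - C a * X) * mk (a ^ ·) = 1 := by
  simpa [mul_comm, rescale_mk, rescale_X] using congrArg (rescale a) (mk_one_mul_one_sub_eq_one R)

theorem coeff_mul_mk_pow {R : Type*} [CommSemiring R] (φ : R⟦X⟧) (a : R) (n : ℕ) :
    coeff n (φ * mk (a ^ ·)) = ∑ i ∈ range (n + 1), coeff i φ * a ^ (n - i) := by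
  simp [coeff_mul, Nat.sum_antidiagonal_eq_sum_range_succ_mk]

theorem coeff_add_coe_mul_of_natDegree_le {R : Type*} [CommSemiring R] {p : Polynomial R}
    {n : ℕ} (hp : p.natDegree ≤ n) (φ : R⟦X⟧) (k : ℕ) :
    coeff (k + n) ((p : R⟦X⟧) * φ) = coeff n ((p : R⟦X⟧) * mk fun d => coeff (k + d) φ) := by
  simp only [coeff_mul, Polynomial.coeff_coe, coeff_mk, Nat.sum_antidiagonal_eq_sum_range_succ_mk]
  symm
  refine sum_subset_zero_on_sdiff (range_subset_range.2 (by omega)) (fun i hi => ?_)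
    (fun i hi => ?_)
  · rw [mem_sdiff, mem_range, mem_range] at hi
    rw [p.coeff_eq_zero_of_natDegree_lt (by omega), zero_mul]
  · rw [mem_range] at hi
    rw [Nat.add_sub_assoc (by omega)]

end PowerSeries

theorem Polynomial.natDegree_prod_one_sub_C_mul_X_le {R : Type*} [CommRing R] {ι : Type*}
    (s : Finset ι) (a : ι → R) : (∏ i ∈ s, (1 - C (a i) * X)).natDegree ≤ #s :=
  (natDegree_prod_le _ _).trans <|
    (sum_le_card_nsmul s _ 1 fun i _ => by compute_degree).trans_eq (by simp)

noncomputable def completeHomogeneous {R : Type*} [CommSemiring R] {N : ℕ} (x : Fin N → R)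
    (k : ℕ) : R :=
  ∑ m ∈ Nat.antidiagonalTuple N k, ∏ i, x i ^ m i

theorem PowerSeries.coeff_prod_mk_pow {R : Type*} [CommSemiring R] {N : ℕ} (x : Fin N → R)
    (k : ℕ) : coeff k (∏ i, mk fun d => x i ^ d) = completeHomogeneous x k := by
  rw [coeff_prod, finsuppAntidiag, sum_map, completeHomogeneous,
    ← piAntidiag_univ_fin_eq_antidiagonalTuple]
  simpa using sum_attach _ fun m : Fin N → ℕ => ∏ i, x i ^ m i

theorem exists_pow_add_eq_sum_mul_pow {A : Type*} [CommRing A] {n : ℕ} (x : Fin (n + 1) → A)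
    (k : ℕ) : ∃ c : Fin (n + 1) → A, c 0 = completeHomogeneous x k ∧
      ∀ j, x j ^ (k + n) = ∑ i, c i * x j ^ (n - i) := by
  set H : A⟦X⟧ := ∏ l, mk fun d => x l ^ d
  set Hk : A⟦X⟧ := mk fun d => coeff (k + d) H
  have hQH : (∏ l, (1 - C (x l) * X)) * H = 1 := by
    rw [← prod_mul_distrib]
    exact prod_eq_one fun l _ => one_sub_C_mul_X_mul_mk_pow (x l)
  refine ⟨fun i => coeff i ((∏ l, (1 - C (x l) * X)) * Hk), ?_, fun j => ?_⟩
  · simp [Hk, H, coeff_prod_mk_pow]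
  set E : Polynomial A := ∏ l ∈ univ.erase j, (1 - Polynomial.C (x l) * Polynomial.X)
  have hQ : ∏ l, (1 - C (x l) * X) = (1 - C (x j) * X) * (E : A⟦X⟧) := by
    rw [← Polynomial.coeToPowerSeries.ringHom_apply, map_prod,
      ← mul_prod_erase univ _ (mem_univ j)]
    simp
  rw [hQ] at hQH ⊢
  set Y : A⟦X⟧ := mk (x j ^ ·)
  have hY : (1 - C (x j) * X) * Y = 1 := one_sub_C_mul_X_mul_mk_pow (x j)
  have hE : E.natDegree ≤ n := by
    simpa [E] using Polynomial.natDegree_prod_one_sub_C_mul_X_le (univ.erase j) x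
  calc x j ^ (k + n) = coeff (k + n) ((E : A⟦X⟧) * H) := by
        rw [show (E : A⟦X⟧) * H = Y by linear_combination Y * hQH - E * H * hY]
        simp [Y]
    _ = coeff n ((1 - C (x j) * X) * (E : A⟦X⟧) * Hk * Y) := by
        rw [coeff_add_coe_mul_of_natDegree_le hE]
        congr 1
        linear_combination (-(E : A⟦X⟧) * Hk) * hY
    _ = ∑ i : Fin (n + 1), coeff i ((1 - C (x j) * X) * (E : A⟦X⟧) * Hk) * x j ^ (n - i) := by
        rw [coeff_mul_mk_pow, Fin.sum_univ_eq_sum_range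
          (fun i => coeff i ((1 - C (x j) * X) * (E : A⟦X⟧) * Hk) * x j ^ (n - i))]

/-- the Schur polynomial of the partition `(k, 0, …, 0)` in bialternant
form equals the complete homogeneous symmetric polynomial `h_k`, multiplied through by
the Vandermonde determinant: `det M = h_k(x) · det V`, where `M` has first row
`x_j^{k+N-1}` and remaining rows `x_j^{N-i}` (`2 ≤ i ≤ N`, `1`-based; `0`-based this
exponent is `N - 1 - i`), and `V_{ij} = x_j^{N-i}`. -/
theorem schur_row_eq_complete_homogeneous
    {A : Type*} [CommRing A] (N : ℕ) (hN : 1 ≤ N) (x : Fin N → A) (k : ℕ) :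
    (Matrix.of fun i j : Fin N =>
        if (i : ℕ) = 0 then x j ^ (k + N - 1) else x j ^ (N - 1 - (i : ℕ))).det =
      (∑ m ∈ Finset.Nat.antidiagonalTuple N k, ∏ i, x i ^ m i) *
        (Matrix.of fun i j : Fin N => x j ^ (N - 1 - (i : ℕ))).det := by
  obtain ⟨n, rfl⟩ := Nat.exists_eq_add_of_le' hN
  obtain ⟨c, hc₀, hc⟩ := exists_pow_add_eq_sum_mul_pow x k
  set V : Matrix (Fin (n + 1)) (Fin (n + 1)) A :=
    Matrix.of fun i j => x j ^ (n + 1 - 1 - (i : ℕ))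
  have hM : Matrix.of (fun i j : Fin (n + 1) =>
      if (i : ℕ) = 0 then x j ^ (k + (n + 1) - 1) else x j ^ (n + 1 - 1 - (i : ℕ))) =
      V.updateRow 0 (∑ i, c i • V i) := by
    ext i j
    rcases eq_or_ne i 0 with rfl | hi
    · simp [V, hc j]
    · simp [V, hi]
  rw [hM, Matrix.det_updateRow_sum, hc₀]
  rfl
end

section
/- Let p be a prime, n ≥ 2 and α_1,…,α_n ∈ ℂ. Let t : ℚ_p^× → GL_n(ℚ_p) be t(a) = diag(a,1,…,1). Suppose W : GL_n(ℚ_p) → ℂ satisfies: W(t(p^k)) = p^{−k(n−1)/2}·h_k(α) for every integer k ≥ 0; W(t(p^k)) = 0 for every integer k < 0; and W(t(a·u)) = W(t(a)) for every a ∈ ℚ_p^× and u ∈ ℤ_p^×. Let μ be a Haar measure on the locally compact group ℚ_p^× normalized so that μ(ℤ_p^×) = 1. Then for every real number s with |α_i| < p^s for all i, the function a ↦ W(t(a))·|a|_p^{s−(n−1)/2} is μ-integrable on ℚ_p^×, and ∫_{ℚ_p^×} W(t(a))·|a|_p^{s−(n−1)/2} dμ(a) = ∏_{i=1}^n (1 −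 α_i·p^{−s})^{−1}. -/
/-!
On `t(ℚ_pˣ)` the integrand depends only on the valuation `v(a) = k`, where it equals
`h_k(α) (p^{-s})^k` for `k ≥ 0` and vanishes for `k < 0`. Left invariance of `μ` gives every
shell `{v = k} = p^k ℤ_pˣ` measure one, so `μ` pushes forward to counting measure on `ℤ` and the
integral is the generating series `∑_k h_k(α) x^k = ∏_i (1 - α_i x)⁻¹` at `x = p^{-s}`. That
identity comes from multiplying the geometric series of the `α_i x` and regrouping by degree.
-/

open MeasureTheory

/-!
The paper's dimension `n ≥ 2` is represented as `n + 1` with `n ≥ 1`, so matrices are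
`(n+1) × (n+1)`, there are `n + 1` numbers `α_i`, and the exponents `−k(n−1)/2` and
`s − (n−1)/2` of the paper read `−k·n/2` and `s − n/2` here.
-/

/-- `ℚ_pˣ` is a locally compact topological group; equip it with its Borel σ-algebra. -/
noncomputable instance (p : ℕ) [Fact p.Prime] : MeasurableSpace ℚ_[p]ˣ := borel ℚ_[p]ˣ

/-- `t(a) = diag(a, 1, …, 1)`. -/
noncomputable def tMat (p : ℕ) [Fact p.Prime] (n : ℕ) (a : ℚ_[p]) :
    Matrix (Fin (n + 1)) (Fin (n + 1)) ℚ_[p] :=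
  Matrix.diagonal (fun i => if (i : ℕ) = 0 then a else 1)

/-- the complete homogeneous symmetric polynomial `h_k(α)` of degree `k`. -/
noncomputable def hpoly (n k : ℕ) (α : Fin (n + 1) → ℂ) : ℂ :=
  ∑ m ∈ Finset.Nat.antidiagonalTuple (n + 1) k, ∏ i, α i ^ m i

theorem Fin.prod_consEquiv {M β : Type*} [CommMonoid M] {m : ℕ} (g : Fin (m + 1) → β → M)
    (x : β × (Fin m → β)) :
    ∏ i, g i (Fin.consEquiv (fun _ => β) x i) = g 0 x.1 * ∏ i, g i.succ (x.2 i) := by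
  simp [Fin.consEquiv, Fin.prod_univ_succ]

section Series

variable {R : Type*} [NormedCommRing R] {β : Type*}

theorem summable_norm_prod_fin {m : ℕ} (g : Fin m → β → R) (hg : ∀ i, Summable (‖g i ·‖)) :
    Summable fun f : Fin m → β => ‖∏ i, g i (f i)‖ := by
  induction m with
  | zero => exact Summable.of_finite
  | succ m ih =>
    rw [← (Fin.consEquiv fun _ => β).summable_iff]
    simpa only [Function.comp_def, Fin.prod_consEquiv] using
      (hg 0).mul_norm (ih (fun i => g i.succ) fun i => hg i.succ)

theorem hasSum_prod_fin [CompleteSpace R] {m : ℕ} (g : Fin m → β → R)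
    (hg : ∀ i, Summable (‖g i ·‖)) :
    HasSum (fun f : Fin m → β => ∏ i, g i (f i)) (∏ i, ∑' b, g i b) := by
  induction m with
  | zero => simp
  | succ m ih =>
    have hhead : HasSum (g 0) (∑' b, g 0 b) := (hg 0).of_norm.hasSum
    have htail : HasSum (fun f : Fin m → β => ∏ i, g i.succ (f i))
        (∏ i : Fin m, ∑' b, g i.succ b) := ih _ fun i => hg i.succ
    rw [← (Fin.consEquiv fun _ => β).hasSum_iff, Fin.prod_univ_succ]
    have hsum := summable_mul_of_summable_norm (hg 0)
      (summable_norm_prod_fin (fun i => g i.succ) fun i => hg i.succ)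
    have hprod := hhead.mul htail hsum
    simpa only [Function.comp_def, Fin.prod_consEquiv] using hprod

end Series

theorem HasSum.sum_antidiagonalTuple {E : Type*} [NormedAddCommGroup E] [CompleteSpace E]
    {N : ℕ} {F : (Fin N → ℕ) → E} {a : E} (hF : HasSum F a) :
    HasSum (fun k => ∑ f ∈ Finset.Nat.antidiagonalTuple N k, F f) a := by
  convert hF.tsum_fiberwise (fun f => ∑ i, f i) using 2 with k
  have hfiber : (fun f : Fin N → ℕ => ∑ i, f i) ⁻¹' {k} = ↑(Finset.Nat.antidiagonalTuple N k) := by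
    ext f
    simp [Finset.Nat.mem_antidiagonalTuple]
  rw [hfiber, Finset.tsum_subtype']

theorem hasSum_hpoly_mul_pow {n : ℕ} (α : Fin (n + 1) → ℂ) {c : ℂ} (hc : ∀ i, ‖α i * c‖ < 1) :
    HasSum (fun k => hpoly n k α * c ^ k) (∏ i, (1 - α i * c)⁻¹) := by
  have hgeom : ∀ i, Summable (‖(α i * c) ^ ·‖) := fun i => by
    simpa only [norm_pow] using summable_geometric_of_lt_one (norm_nonneg _) (hc i)
  have hgrouped := (hasSum_prod_fin _ hgeom).sum_antidiagonalTuple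
  simp only [tsum_geometric_of_norm_lt_one (hc _)] at hgrouped
  have hcoef : ∀ k, ∑ f ∈ Finset.Nat.antidiagonalTuple (n + 1) k, ∏ i, (α i * c) ^ f i =
      hpoly n k α * c ^ k := fun k => by
    rw [hpoly, Finset.sum_mul]
    refine Finset.sum_congr rfl fun f hf => ?_
    rw [← Finset.Nat.mem_antidiagonalTuple.1 hf, ← Finset.prod_pow_eq_pow_sum,
      ← Finset.prod_mul_distrib]
    simp only [mul_pow]
  simpa only [hcoef] using hgrouped

namespace Padic

variable {p : ℕ} [hp : Fact p.Prime]

instance : BorelSpace ℚ_[p]ˣ := ⟨rfl⟩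

theorem valuation_eq_iff_norm_eq {x : ℚ_[p]} (hx : x ≠ 0) (k : ℤ) :
    x.valuation = k ↔ ‖x‖ = (p : ℝ) ^ (-k) := by
  rw [norm_eq_zpow_neg_valuation hx, zpow_right_inj₀ (by exact_mod_cast hp.out.pos)
    (by exact_mod_cast hp.out.one_lt.ne'), neg_inj]

theorem apply_eq_apply_zpow_valuation {X : Type*} {f : ℚ_[p] → X}
    (hf : ∀ a u : ℚ_[p], a ≠ 0 → ‖u‖ = 1 → f (a * u) = f a) {x : ℚ_[p]} (hx : x ≠ 0) :
    f x = f ((p : ℚ_[p]) ^ x.valuation) := by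
  have hp0 : (p : ℚ_[p]) ≠ 0 := by exact_mod_cast hp.out.ne_zero
  have hunit : ‖(p : ℚ_[p]) ^ (-x.valuation) * x‖ = 1 := by
    rw [norm_mul, norm_p_zpow, norm_eq_zpow_neg_valuation hx, neg_neg,
      ← zpow_add₀ (by exact_mod_cast hp.out.ne_zero), add_neg_cancel, zpow_zero]
  have := hf _ _ (zpow_ne_zero x.valuation hp0) hunit
  rwa [← mul_assoc, ← zpow_add₀ hp0, add_neg_cancel, zpow_zero, one_mul] at this

variable (p) in
noncomputable def unitsValuation (a : ℚ_[p]ˣ) : ℤ := (a : ℚ_[p]).valuation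

theorem unitsValuation_mul (a b : ℚ_[p]ˣ) :
    unitsValuation p (a * b) = unitsValuation p a + unitsValuation p b :=
  valuation_mul a.ne_zero b.ne_zero

variable (p) in
noncomputable def pUnit : ℚ_[p]ˣ := Units.mk0 p (by exact_mod_cast hp.out.ne_zero)

theorem unitsValuation_pUnit_zpow (k : ℤ) : unitsValuation p (pUnit p ^ k) = k := by
  simp [unitsValuation, pUnit, valuation_zpow]

theorem measurable_unitsValuation : Measurable (unitsValuation p) := by
  refine measurable_to_countable' fun k => ?_
  have hfiber :
      unitsValuation p ⁻¹' {k} = (fun a : ℚ_[p]ˣ => ‖(a : ℚ_[p])‖) ⁻¹' {(p : ℝ) ^ (-k)} := by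
    ext a
    exact valuation_eq_iff_norm_eq a.ne_zero k
  rw [hfiber]
  exact (continuous_norm.comp Units.continuous_val).measurable (measurableSet_singleton _)

theorem unitsValuation_preimage_singleton (k : ℤ) :
    unitsValuation p ⁻¹' {k} = (pUnit p ^ (-k) * ·) ⁻¹' (unitsValuation p ⁻¹' {0}) := by
  ext a
  simp only [Set.mem_preimage, Set.mem_singleton_iff, unitsValuation_mul,
    unitsValuation_pUnit_zpow]
  omega

theorem map_unitsValuation_eq_count (μ : Measure ℚ_[p]ˣ) [μ.IsMulLeftInvariant]
    (hμ : μ {a : ℚ_[p]ˣ | ‖(a : ℚ_[p])‖ = 1} = 1) : μ.map (unitsValuation p) = Measure.count := by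
  have hzero : unitsValuation p ⁻¹' {0} = {a : ℚ_[p]ˣ | ‖(a : ℚ_[p])‖ = 1} := by
    ext a
    simpa [unitsValuation] using valuation_eq_iff_norm_eq a.ne_zero 0
  refine Measure.ext_iff_singleton.2 fun k => ?_
  rw [Measure.map_apply measurable_unitsValuation (measurableSet_singleton k),
    unitsValuation_preimage_singleton, measure_preimage_mul, hzero, hμ, Measure.count_singleton]

variable {E : Type*} [NormedAddCommGroup E] {μ : Measure ℚ_[p]ˣ} [μ.IsMulLeftInvariant]

theorem integrable_comp_unitsValuation (hμ : μ {a : ℚ_[p]ˣ | ‖(a : ℚ_[p])‖ = 1} = 1)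
    {G : ℤ → E} (hG : Summable (‖G ·‖)) : Integrable (fun a => G (unitsValuation p a)) μ := by
  refine (integrable_map_measure AEStronglyMeasurable.of_discrete
    measurable_unitsValuation.aemeasurable).1 ?_
  rw [map_unitsValuation_eq_count μ hμ]
  exact integrable_count_iff.2 hG

theorem integral_comp_unitsValuation [NormedSpace ℝ E] [CompleteSpace E]
    (hμ : μ {a : ℚ_[p]ˣ | ‖(a : ℚ_[p])‖ = 1} = 1) {G : ℤ → E}
    (hG : Summable (‖G ·‖)) : ∫ a, G (unitsValuation p a) ∂μ = ∑' k, G k := by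
  rw [← integral_map measurable_unitsValuation.aemeasurable
    AEStronglyMeasurable.of_discrete, map_unitsValuation_eq_count μ hμ,
    integral_countable (integrable_count_iff.2 hG)]
  simp [Measure.real]

end Padic

theorem norm_mul_rpow_neg_lt_one {z : ℂ} {b s : ℝ} (hb : 0 < b) (hz : ‖z‖ < b ^ s) :
    ‖z * ((b ^ (-s) : ℝ) : ℂ)‖ < 1 := by
  rw [norm_mul, Complex.norm_real, Real.norm_of_nonneg (by positivity), Real.rpow_neg hb.le,
    mul_inv_lt_iff₀ (by positivity), one_mul]
  exact hz

section ZetaTerm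

variable {p : ℕ} [Fact p.Prime] {n : ℕ} {W : Matrix (Fin (n + 1)) (Fin (n + 1)) ℚ_[p] → ℂ}
  {s : ℝ}

variable (p n W s) in
noncomputable def zetaTerm (k : ℤ) : ℂ :=
  W (tMat p n ((p : ℚ_[p]) ^ k)) * ((((p : ℝ) ^ (-k) : ℝ) ^ (s - (n : ℝ) / 2) : ℝ) : ℂ)

theorem zetaIntegrand_eq_zetaTerm
    (hW3 : ∀ a u : ℚ_[p], a ≠ 0 → ‖u‖ = 1 → W (tMat p n (a * u)) = W (tMat p n a))
    (a : ℚ_[p]ˣ) :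
    W (tMat p n (a : ℚ_[p])) * ((‖(a : ℚ_[p])‖ ^ (s - (n : ℝ) / 2) : ℝ) : ℂ) =
      zetaTerm p n W s (Padic.unitsValuation p a) := by
  rw [Padic.apply_eq_apply_zpow_valuation (f := fun x => W (tMat p n x)) hW3 a.ne_zero,
    Padic.norm_eq_zpow_neg_valuation a.ne_zero]
  rfl

theorem zetaTerm_natCast {α : Fin (n + 1) → ℂ}
    (hW1 : ∀ k : ℕ, W (tMat p n ((p : ℚ_[p]) ^ (k : ℤ))) =
      (((p : ℝ) ^ (-((k : ℝ) * (n : ℝ)) / 2) : ℝ) : ℂ) * hpoly n k α) (k : ℕ) :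
    zetaTerm p n W s k = hpoly n k α * (((p : ℝ) ^ (-s) : ℝ) : ℂ) ^ k := by
  have hp : (0 : ℝ) < p := by exact_mod_cast (Fact.out : p.Prime).pos
  have hweight : (p : ℝ) ^ (-((k : ℝ) * n) / 2) * ((p : ℝ) ^ (-(k : ℤ))) ^ (s - (n : ℝ) / 2) =
      ((p : ℝ) ^ (-s)) ^ k := by
    rw [← Real.rpow_intCast, ← Real.rpow_natCast, ← Real.rpow_mul hp.le, ← Real.rpow_mul hp.le,
      ← Real.rpow_add hp]
    push_cast
    ring_nf
  simp only [zetaTerm, hW1, ← Complex.ofReal_pow, ← hweight]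
  push_cast
  ring

theorem zetaTerm_of_neg (hW2 : ∀ k : ℤ, k < 0 → W (tMat p n ((p : ℚ_[p]) ^ k)) = 0) {k : ℤ}
    (hk : k < 0) : zetaTerm p n W s k = 0 := by
  simp only [zetaTerm, hW2 k hk, zero_mul]

theorem hasSum_zetaTerm {α : Fin (n + 1) → ℂ}
    (hW1 : ∀ k : ℕ, W (tMat p n ((p : ℚ_[p]) ^ (k : ℤ))) =
      (((p : ℝ) ^ (-((k : ℝ) * (n : ℝ)) / 2) : ℝ) : ℂ) * hpoly n k α)
    (hW2 : ∀ k : ℤ, k < 0 → W (tMat p n ((p : ℚ_[p]) ^ k)) = 0)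
    (hs : ∀ i, ‖α i‖ < (p : ℝ) ^ s) :
    HasSum (zetaTerm p n W s) (∏ i, (1 - α i * (((p : ℝ) ^ (-s) : ℝ) : ℂ))⁻¹) := by
  have hp : (0 : ℝ) < p := by exact_mod_cast (Fact.out : p.Prime).pos
  refine (Nat.cast_injective.hasSum_iff fun k hk => zetaTerm_of_neg hW2 ?_).1 ?_
  · by_contra! h
    exact hk ⟨k.toNat, Int.toNat_of_nonneg h⟩
  · simpa only [Function.comp_def, zetaTerm_natCast hW1] using
      hasSum_hpoly_mul_pow α fun i => norm_mul_rpow_neg_lt_one hp (hs i)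

end ZetaTerm

theorem zeta_integral_eq_L_factor_general
    (p : ℕ) [Fact p.Prime] (n : ℕ)
    (α : Fin (n + 1) → ℂ)
    (W : Matrix (Fin (n + 1)) (Fin (n + 1)) ℚ_[p] → ℂ)
    (hW1 : ∀ k : ℕ, W (tMat p n ((p : ℚ_[p]) ^ (k : ℤ))) =
      (((p : ℝ) ^ (-((k : ℝ) * (n : ℝ)) / 2) : ℝ) : ℂ) * hpoly n k α)
    (hW2 : ∀ k : ℤ, k < 0 → W (tMat p n ((p : ℚ_[p]) ^ k)) = 0)
    (hW3 : ∀ a u : ℚ_[p], a ≠ 0 → ‖u‖ = 1 → W (tMat p n (a * u)) = W (tMat p n a))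
    (μ : Measure ℚ_[p]ˣ) (hHaar : μ.IsHaarMeasure)
    (hnorm : μ {x : ℚ_[p]ˣ | ‖(x : ℚ_[p])‖ = 1} = 1)
    (s : ℝ) (hs : ∀ i, ‖α i‖ < (p : ℝ) ^ s) :
    Integrable (fun a : ℚ_[p]ˣ =>
        W (tMat p n (a : ℚ_[p])) * ((‖(a : ℚ_[p])‖ ^ (s - (n : ℝ) / 2) : ℝ) : ℂ)) μ ∧
      ∫ a : ℚ_[p]ˣ,
          W (tMat p n (a : ℚ_[p])) * ((‖(a : ℚ_[p])‖ ^ (s - (n : ℝ) / 2) : ℝ) : ℂ) ∂μ =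
        ∏ i, (1 - α i * (((p : ℝ) ^ (-s) : ℝ) : ℂ))⁻¹ := by
  have := hHaar
  have hsum := hasSum_zetaTerm hW1 hW2 hs
  have hsum_norm := summable_norm_iff.2 hsum.summable
  simp only [zetaIntegrand_eq_zetaTerm hW3]
  exact ⟨Padic.integrable_comp_unitsValuation hnorm hsum_norm,
    (Padic.integral_comp_unitsValuation hnorm hsum_norm).trans hsum.tsum_eq⟩

/-- Theorem 5.1 of the paper: if `W` takes the values of the Whittaker
function of a newform (normalized by `W(1) = 1`) on `t(ℚ_pˣ)`, i.e.
`W(t(p^k)) = p^{−k(n−1)/2} h_k(α)` for `k ≥ 0`, `W(t(p^k)) = 0` for `k < 0`, and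
`W(t(au)) = W(t(a))` for `u ∈ ℤ_pˣ`, and if `μ` is a Haar measure on `ℚ_pˣ` with
`μ(ℤ_pˣ) = 1`, then for every real `s` with `|α_i| < p^s` for all `i`, the zeta
integrand `a ↦ W(t(a))·|a|_p^{s−(n−1)/2}` is `μ`-integrable on `ℚ_pˣ` with integral
`∏_{i=1}^n (1 − α_i p^{−s})⁻¹`. -/
theorem zeta_integral_eq_L_factor
    (p : ℕ) [Fact p.Prime] (n : ℕ) (hn : 1 ≤ n)
    (α : Fin (n + 1) → ℂ)
    (W : Matrix (Fin (n + 1)) (Fin (n + 1)) ℚ_[p] → ℂ)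
    (hW1 : ∀ k : ℕ, W (tMat p n ((p : ℚ_[p]) ^ (k : ℤ))) =
      (((p : ℝ) ^ (-((k : ℝ) * (n : ℝ)) / 2) : ℝ) : ℂ) * hpoly n k α)
    (hW2 : ∀ k : ℤ, k < 0 → W (tMat p n ((p : ℚ_[p]) ^ k)) = 0)
    (hW3 : ∀ a u : ℚ_[p], a ≠ 0 → ‖u‖ = 1 → W (tMat p n (a * u)) = W (tMat p n a))
    (μ : Measure ℚ_[p]ˣ) (hHaar : μ.IsHaarMeasure)
    (hnorm : μ {x : ℚ_[p]ˣ | ‖(x : ℚ_[p])‖ = 1} = 1)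
    (s : ℝ) (hs : ∀ i, ‖α i‖ < (p : ℝ) ^ s) :
    Integrable (fun a : ℚ_[p]ˣ =>
        W (tMat p n (a : ℚ_[p])) * ((‖(a : ℚ_[p])‖ ^ (s - (n : ℝ) / 2) : ℝ) : ℂ)) μ ∧
      ∫ a : ℚ_[p]ˣ,
          W (tMat p n (a : ℚ_[p])) * ((‖(a : ℚ_[p])‖ ^ (s - (n : ℝ) / 2) : ℝ) : ℂ) ∂μ =
        ∏ i, (1 - α i * (((p : ℝ) ^ (-s) : ℝ) : ℂ))⁻¹ :=
  zeta_integral_eq_L_factor_general p n α W hW1 hW2 hW3 μ hHaar hnorm s hs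
end
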